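/- arXiv:2603.21351 — 3 statements merged into one kernel-verified Lean document; each statement's English description precedes it below -/
import Mathlib

section
/- Let f be a complex-valued function on ℝ² and C ≥ 0. Suppose that |(f(x₁, y₂) − f(x₁, x₂))·(x₂ + i)| ≤ C·|y₂ − x₂| for all x₁, x₂, y₂ ∈ ℝ, and |(f(y₁, y₂) − f(x₁, y₂))·(x₁ + i)| ≤ C·|y₁ − x₁| for all x₁, y₁, y₂ ∈ ℝ. Then f is bounded; in fact |f(t, s)| ≤ 2C + |f(0, 0)| for all s, t ∈ ℝ. -/
open Complex

lemma abs_le_norm_ofReal_add_I (x : ℝ) : |x| ≤ ‖(x : ℂ) + I‖ := by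
  simpa using abs_re_le_norm ((x : ℂ) + I)

lemma ofReal_add_I_ne_zero (x : ℝ) : (x : ℂ) + I ≠ 0 := fun h => by
  simpa using congrArg im h

lemma norm_le_of_norm_mul_ofReal_add_I_le {a : ℂ} {x C : ℝ} (hC : 0 ≤ C)
    (h : ‖a * ((x : ℂ) + I)‖ ≤ C * |x|) : ‖a‖ ≤ C := by
  have hpos : 0 < ‖(x : ℂ) + I‖ := norm_pos_iff.mpr (ofReal_add_I_ne_zero x)
  refine le_of_mul_le_mul_right ?_ hpos
  calc ‖a‖ * ‖(x : ℂ) + I‖ = ‖a * ((x : ℂ) + I)‖ := (norm_mul _ _).symm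
    _ ≤ C * |x| := h
    _ ≤ C * ‖(x : ℂ) + I‖ := mul_le_mul_of_nonneg_left (abs_le_norm_ofReal_add_I x) hC

/-- If `f : ℝ² → ℂ` satisfies
`|(f(x₁,y₂) − f(x₁,x₂))·(x₂+i)| ≤ C·|y₂−x₂|` and
`|(f(y₁,y₂) − f(x₁,y₂))·(x₁+i)| ≤ C·|y₁−x₁|`, then `f` is bounded:
`|f(t,s)| ≤ 2C + |f(0,0)|` for all `s, t`. -/
theorem bounded_of_weighted_difference_bounds
    (f : ℝ × ℝ → ℂ) (C : ℝ) (hC : 0 ≤ C)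
    (h1 : ∀ x₁ x₂ y₂ : ℝ,
      ‖(f (x₁, y₂) - f (x₁, x₂)) * ((x₂ : ℂ) + Complex.I)‖ ≤ C * |y₂ - x₂|)
    (h2 : ∀ x₁ y₁ y₂ : ℝ,
      ‖(f (y₁, y₂) - f (x₁, y₂)) * ((x₁ : ℂ) + Complex.I)‖ ≤ C * |y₁ - x₁|) :
    ∀ t s : ℝ, ‖f (t, s)‖ ≤ 2 * C + ‖f (0, 0)‖ := by
  intro t s
  have vertical : ‖f (t, 0) - f (t, s)‖ ≤ C :=
    norm_le_of_norm_mul_ofReal_add_I_le hC (by simpa using h1 t s 0)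
  have horizontal : ‖f (0, 0) - f (t, 0)‖ ≤ C :=
    norm_le_of_norm_mul_ofReal_add_I_le hC (by simpa using h2 t 0 0)
  calc ‖f (t, s)‖ ≤ ‖f (0, 0)‖ + ‖f (0, 0) - f (t, s)‖ := norm_le_norm_add_norm_sub _ _
    _ ≤ ‖f (0, 0)‖ + (‖f (0, 0) - f (t, 0)‖ + ‖f (t, 0) - f (t, s)‖) :=
      by gcongr; exact norm_sub_le_norm_sub_add_norm_sub _ _ _
    _ ≤ 2 * C + ‖f (0, 0)‖ := by linarith
end

section
/- Let f be a complex-valued function on ℝ² and C ≥ 0. Suppose that |f(x₁, y₂)·(y₂ + i) − f(x₁, x₂)·(x₂ + i)| ≤ C·|y₂ − x₂| for all x₁, x₂, y₂ ∈ ℝ, and |f(y₁, y₂)·(y₁ + i) − f(x₁, y₂)·(x₁ + i)| ≤ C·|y₁ − x₁| for all x₁, y₁, y₂ ∈ ℝ. Then f is bounded on ℝ². -/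
lemma aux_norm_ge (s : ℝ) : |s| ≤ ‖(s : ℂ) + Complex.I‖ ∧ 1 ≤ ‖(s : ℂ) + Complex.I‖ := by
  have h1 := Complex.abs_re_le_norm ((s : ℂ) + Complex.I)
  have h2 := Complex.abs_im_le_norm ((s : ℂ) + Complex.I)
  simp [Complex.add_re, Complex.add_im] at h1 h2
  exact ⟨h1, h2⟩

/-- If `f : ℝ² → ℂ` satisfies
`|f(x₁,y₂)(y₂+i) − f(x₁,x₂)(x₂+i)| ≤ C·|y₂−x₂|` and
`|f(y₁,y₂)(y₁+i) − f(x₁,y₂)(x₁+i)| ≤ C·|y₁−x₁|`, then `f` is bounded on `ℝ²`. -/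
theorem bounded_of_weighted_lipschitz
    (f : ℝ × ℝ → ℂ) (C : ℝ) (hC : 0 ≤ C)
    (h1 : ∀ x₁ x₂ y₂ : ℝ,
      ‖f (x₁, y₂) * ((y₂ : ℂ) + Complex.I) - f (x₁, x₂) * ((x₂ : ℂ) + Complex.I)‖
        ≤ C * |y₂ - x₂|)
    (h2 : ∀ x₁ y₁ y₂ : ℝ,
      ‖f (y₁, y₂) * ((y₁ : ℂ) + Complex.I) - f (x₁, y₂) * ((x₁ : ℂ) + Complex.I)‖
        ≤ C * |y₁ - x₁|) :
    ∃ M : ℝ, ∀ t s : ℝ, ‖f (t, s)‖ ≤ M := by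
  set A := ‖f (0, 0)‖ with hA
  have hA0 : 0 ≤ A := norm_nonneg _
  have normI : ‖((0 : ℝ) : ℂ) + Complex.I‖ = 1 := by
    simp
  -- step 1: f(t,0) bounded
  have step1 : ∀ t : ℝ, ‖f (t, 0)‖ ≤ C + A := by
    intro t
    obtain ⟨hre, him⟩ := aux_norm_ge t
    have hpos : 0 < ‖(t : ℂ) + Complex.I‖ := lt_of_lt_of_le one_pos him
    have key := h2 0 t 0
    have hb : ‖f (t, 0) * ((t : ℂ) + Complex.I)‖ ≤ C * |t| + A := by
      calc ‖f (t, 0) * ((t : ℂ) + Complex.I)‖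
          ≤ ‖f (t, 0) * ((t : ℂ) + Complex.I) - f (0, 0) * (((0:ℝ) : ℂ) + Complex.I)‖
            + ‖f (0, 0) * (((0:ℝ) : ℂ) + Complex.I)‖ := by simpa using norm_add_le (f (t, 0) * ((t : ℂ) + Complex.I) - f (0, 0) * (((0:ℝ) : ℂ) + Complex.I)) (f (0, 0) * (((0:ℝ) : ℂ) + Complex.I))
        _ ≤ C * |t - 0| + A := by
            rw [norm_mul, normI, mul_one]
            exact add_le_add key le_rfl
        _ = C * |t| + A := by rw [sub_zero]
    rw [norm_mul] at hb
    have : ‖f (t, 0)‖ * ‖(t : ℂ) + Complex.I‖ ≤ (C + A) * ‖(t : ℂ) + Complex.I‖ := by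
      calc ‖f (t, 0)‖ * ‖(t : ℂ) + Complex.I‖ ≤ C * |t| + A := hb
        _ ≤ C * ‖(t : ℂ) + Complex.I‖ + A * ‖(t : ℂ) + Complex.I‖ := by
            gcongr
            · exact le_mul_of_one_le_right hA0 him
        _ = (C + A) * ‖(t : ℂ) + Complex.I‖ := by ring
    exact le_of_mul_le_mul_right this hpos
  refine ⟨2 * C + A, fun t s => ?_⟩
  obtain ⟨hre, him⟩ := aux_norm_ge s
  have hpos : 0 < ‖(s : ℂ) + Complex.I‖ := lt_of_lt_of_le one_pos him
  have key := h1 t 0 s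
  have hb : ‖f (t, s) * ((s : ℂ) + Complex.I)‖ ≤ C * |s| + (C + A) := by
    calc ‖f (t, s) * ((s : ℂ) + Complex.I)‖
        ≤ ‖f (t, s) * ((s : ℂ) + Complex.I) - f (t, 0) * (((0:ℝ) : ℂ) + Complex.I)‖
          + ‖f (t, 0) * (((0:ℝ) : ℂ) + Complex.I)‖ := by simpa using norm_add_le (f (t, s) * ((s : ℂ) + Complex.I) - f (t, 0) * (((0:ℝ) : ℂ) + Complex.I)) (f (t, 0) * (((0:ℝ) : ℂ) + Complex.I))
      _ ≤ C * |s - 0| + (C + A) := by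
          rw [norm_mul, normI, mul_one]
          exact add_le_add key (step1 t)
      _ = C * |s| + (C + A) := by rw [sub_zero]
  rw [norm_mul] at hb
  have hfin : ‖f (t, s)‖ * ‖(s : ℂ) + Complex.I‖ ≤ (2 * C + A) * ‖(s : ℂ) + Complex.I‖ := by
    calc ‖f (t, s)‖ * ‖(s : ℂ) + Complex.I‖ ≤ C * |s| + (C + A) := hb
      _ ≤ C * ‖(s : ℂ) + Complex.I‖ + (C + A) * ‖(s : ℂ) + Complex.I‖ := by
          gcongr
          · exact le_mul_of_one_le_right (by linarith) him
      _ = (2 * C + A) * ‖(s : ℂ) + Complex.I‖ := by ring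
  exact le_of_mul_le_mul_right hfin hpos
end

section
/- Let E₁ and E₂ be spectral measures on Hilbert spaces, and let Φ(x, y) = Σ_{n≥0} φₙ(x)ψₙ(y), where the φₙ are bounded measurable functions with Σ|φₙ|² ≤ a² pointwise and the ψₙ are bounded measurable functions with Σ|ψₙ|² ≤ b² pointwise. Then for every bounded operator Q, the series Σ_{n≥0} (∫ φₙ dE₁) Q (∫ ψₙ dE₂) converges in the weak operator topology to a bounded operator T with ‖T‖ ≤ a·b·‖Q‖. -/
/-!
Write `⟪(∫φₙ) Q (∫ψₙ) u, v⟫ = ⟪Q (∫ψₙ) u, (∫φ̄ₙ) v⟫`; by Cauchy–Schwarz the series is absolutely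
summable with sum at most `ab‖Q‖‖u‖‖v‖` once `Σₙ ‖(∫ψₙ) u‖² ≤ b²‖u‖²` and likewise for `φ̄ₙ`.
That estimate holds because `Σₙ ‖(∫ψₙ) u‖² = re ⟪(∫ Σₙ |ψₙ|²) u, u⟫`, which uses `(∫ψ)* = ∫ψ̄`.
This is not an axiom of a spectral measure: it holds for simple functions by self-adjointness of
the projections, and passes to bounded measurable functions by uniform approximation. The
resulting bounded sesquilinear form is represented by the operator `T` (Riesz).
-/

open scoped InnerProductSpace

/-- A projection-valued spectral measure on a measurable space `(α, 𝔄)`, acting on a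
complex Hilbert space `H`, bundled together with its bounded Borel functional calculus
`integral φ = ∫ φ dE`. -/
structure SpectralMeasure (α : Type*) [MeasurableSpace α]
    (H : Type*) [NormedAddCommGroup H] [InnerProductSpace ℂ H] [CompleteSpace H] where
  /-- the projection `E(s)` associated with a measurable set `s` -/
  proj : Set α → H →L[ℂ] H
  proj_idem : ∀ s, MeasurableSet s → (proj s).comp (proj s) = proj s
  proj_selfAdjoint : ∀ s, MeasurableSet s →
    ∀ x y : H, ⟪proj s x, y⟫_ℂ = ⟪x, proj s y⟫_ℂ
  proj_univ : proj Set.univ = ContinuousLinearMap.id ℂ H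
  proj_inter : ∀ s t, MeasurableSet s → MeasurableSet t →
    proj (s ∩ t) = (proj s).comp (proj t)
  proj_countablyAdditive : ∀ s : ℕ → Set α, (∀ n, MeasurableSet (s n)) →
    Pairwise (Function.onFun Disjoint s) →
    ∀ x : H, HasSum (fun n => proj (s n) x) (proj (⋃ n, s n) x)
  /-- the functional calculus `φ ↦ ∫ φ dE` for bounded measurable `φ` -/
  integral : (α → ℂ) → H →L[ℂ] H
  integral_indicator : ∀ s : Set α, MeasurableSet s →
    integral (s.indicator fun _ => 1) = proj s
  integral_add : ∀ φ ψ : α → ℂ, Measurable φ → Measurable ψ →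
    integral (φ + ψ) = integral φ + integral ψ
  integral_smul : ∀ (c : ℂ) (φ : α → ℂ), integral (c • φ) = c • integral φ
  integral_mul : ∀ φ ψ : α → ℂ, Measurable φ → Measurable ψ →
    integral (φ * ψ) = (integral φ).comp (integral ψ)
  integral_norm_le : ∀ (φ : α → ℂ) (M : ℝ), (∀ a, ‖φ a‖ ≤ M) → ‖integral φ‖ ≤ M
theorem Measurable.star {α β : Type*} [MeasurableSpace α] [TopologicalSpace β] [Star β]
    [ContinuousStar β] [MeasurableSpace β] [BorelSpace β] {f : α → β} (hf : Measurable f) :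
    Measurable (star f) :=
  continuous_star.measurable.comp hf

namespace MeasureTheory.SimpleFunc

theorem exists_forall_dist_lt {α β : Type*} [MeasurableSpace α] [PseudoMetricSpace β]
    [MeasurableSpace β] [OpensMeasurableSpace β] [Nonempty β] {f : α → β} (hf : Measurable f)
    {K : Set β} (hK : IsCompact K) (hfK : ∀ x, f x ∈ K) {ε : ℝ} (hε : 0 < ε) :
    ∃ g : SimpleFunc α β, ∀ x, dist (g x) (f x) < ε := by
  obtain ⟨t, -, ht, hKt⟩ := hK.finite_cover_balls hε
  let l := ht.toFinset.toList
  let e : ℕ → β := fun n => l.getD n (Classical.arbitrary β)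
  refine ⟨(nearestPt e l.length).comp f hf, fun x => ?_⟩
  obtain ⟨z, hzt, hz⟩ := Set.mem_iUnion₂.1 (hKt (hfK x))
  obtain ⟨k, hk, rfl⟩ := List.mem_iff_getElem.1 (Finset.mem_toList.2 (ht.mem_toFinset.2 hzt))
  have hek : e k = l[k] := List.getD_eq_getElem l _ hk
  have := edist_nearestPt_le e (f x) hk.le
  rw [hek, edist_dist, edist_dist, ENNReal.ofReal_le_ofReal_iff dist_nonneg] at this
  exact this.trans_lt (Metric.mem_ball'.1 hz)

end MeasureTheory.SimpleFunc

theorem norm_le_sqrt_of_sum_sq_le {ι E : Type*} [SeminormedAddCommGroup E] {s : Finset ι}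
    {f : ι → E} {M : ℝ} (h : ∑ i ∈ s, ‖f i‖ ^ 2 ≤ M) {i : ι} (hi : i ∈ s) : ‖f i‖ ≤ √M :=
  (le_abs_self _).trans <| Real.abs_le_sqrt <|
    (Finset.single_le_sum (fun j _ => sq_nonneg ‖f j‖) hi).trans h

theorem exists_hasSum_inner_of_sum_norm_inner_le {𝕜 E ι : Type*} [RCLike 𝕜]
    [NormedAddCommGroup E] [InnerProductSpace 𝕜 E] [CompleteSpace E]
    (A : ι → E →L[𝕜] E) {C : ℝ} (hC : 0 ≤ C)
    (h : ∀ u v (s : Finset ι), ∑ n ∈ s, ‖⟪A n u, v⟫_𝕜‖ ≤ C * ‖u‖ * ‖v‖) :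
    ∃ T : E →L[𝕜] E, ‖T‖ ≤ C ∧ ∀ u v, HasSum (fun n => ⟪A n u, v⟫_𝕜) ⟪T u, v⟫_𝕜 := by
  have hsum (u v : E) : Summable fun n => ⟪A n u, v⟫_𝕜 :=
    .of_norm (summable_of_sum_le (fun _ => norm_nonneg _) (h u v))
  let B : E →L⋆[𝕜] E →L[𝕜] 𝕜 := LinearMap.mkContinuous₂
    (LinearMap.mk₂'ₛₗ (starRingEnd 𝕜) (RingHom.id 𝕜) (fun u v => ∑' n, ⟪A n u, v⟫_𝕜)
      (fun u w v => by simp only [map_add, inner_add_left, (hsum u v).tsum_add (hsum w v)])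
      (fun c u v => by simp only [map_smul, inner_smul_left, tsum_mul_left, smul_eq_mul])
      (fun u v w => by simp only [inner_add_right, (hsum u v).tsum_add (hsum u w)])
      (fun c u v => by simp only [inner_smul_right, tsum_mul_left, smul_eq_mul, RingHom.id_apply]))
    C fun u v => (norm_tsum_le_tsum_norm (hsum u v).norm).trans
      (Real.tsum_le_of_sum_le (fun _ => norm_nonneg _) (h u v))
  refine ⟨InnerProductSpace.continuousLinearMapOfBilin B, ?_, fun u v => ?_⟩
  · refine ContinuousLinearMap.opNorm_le_bound _ hC fun u => ?_
    simpa [InnerProductSpace.continuousLinearMapOfBilin] using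
      B.le_of_opNorm_le (LinearMap.mkContinuous₂_norm_le _ hC _) u
  · rw [InnerProductSpace.continuousLinearMapOfBilin_apply]
    exact (hsum u v).hasSum

namespace SpectralMeasure

variable {α H : Type*} [MeasurableSpace α] [NormedAddCommGroup H] [InnerProductSpace ℂ H]
  [CompleteSpace H] (E : SpectralMeasure α H)

theorem integral_zero : E.integral 0 = 0 := by
  simpa using E.integral_smul 0 0

theorem integral_sub {φ ψ : α → ℂ} (hφ : Measurable φ) (hψ : Measurable ψ) :
    E.integral (φ - ψ) = E.integral φ - E.integral ψ := by
  rw [eq_sub_iff_add_eq, ← E.integral_add _ _ (hφ.sub hψ) hψ, sub_add_cancel]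

theorem norm_integral_sub_le {φ ψ : α → ℂ} (hφ : Measurable φ) (hψ : Measurable ψ) {M : ℝ}
    (h : ∀ x, ‖φ x - ψ x‖ ≤ M) : ‖E.integral φ - E.integral ψ‖ ≤ M := by
  rw [← E.integral_sub hφ hψ]
  exact E.integral_norm_le _ M h

theorem integral_finset_sum {ι : Type*} (s : Finset ι) {φ : ι → α → ℂ}
    (hφ : ∀ i, Measurable (φ i)) :
    E.integral (fun x => ∑ i ∈ s, φ i x) = ∑ i ∈ s, E.integral (φ i) := by
  classical
  induction s using Finset.induction_on with
  | empty => simp only [Finset.sum_empty]; exact E.integral_zero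
  | insert i s hi ih =>
    simp only [Finset.sum_insert hi]
    rw [← ih, ← E.integral_add _ _ (hφ i) (Finset.measurable_sum _ fun j _ => hφ j)]
    rfl

theorem isSelfAdjoint_proj {s : Set α} (hs : MeasurableSet s) : IsSelfAdjoint (E.proj s) :=
  ContinuousLinearMap.isSelfAdjoint_iff_isSymmetric.2 (E.proj_selfAdjoint s hs)

theorem integral_indicator_const (c : ℂ) {s : Set α} (hs : MeasurableSet s) :
    E.integral (s.indicator fun _ => c) = c • E.proj s := by
  rw [← E.integral_indicator s hs, ← E.integral_smul]
  congr 1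
  ext x; by_cases hx : x ∈ s <;> simp [hx]

open MeasureTheory SimpleFunc in
theorem star_integral_simpleFunc (g : SimpleFunc α ℂ) :
    star (E.integral g) = E.integral (star ⇑g) := by
  induction g using SimpleFunc.induction with
  | @const c s hs =>
    have hg : ⇑(piecewise s hs (const α c) (const α 0)) = s.indicator fun _ => c := by
      simp [Set.piecewise_eq_indicator]; rfl
    have hstar : star (s.indicator fun _ => c) = s.indicator fun _ => star c := by
      ext x; by_cases hx : x ∈ s <;> simp [hx]
    rw [hg, hstar, integral_indicator_const _ _ hs, integral_indicator_const _ _ hs, star_smul,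
      (E.isSelfAdjoint_proj hs).star_eq]
  | @add f g _ hf hg =>
    rw [coe_add, star_add, E.integral_add _ _ f.measurable g.measurable, star_add, hf, hg,
      E.integral_add _ _ f.measurable.star g.measurable.star]

theorem star_integral {φ : α → ℂ} (hφ : Measurable φ) {M : ℝ} (hM : ∀ x, ‖φ x‖ ≤ M) :
    star (E.integral φ) = E.integral (star φ) := by
  refine eq_of_forall_dist_le fun ε hε => ?_
  obtain ⟨g, hg⟩ := MeasureTheory.SimpleFunc.exists_forall_dist_lt hφ
    (isCompact_closedBall (0 : ℂ) M) (fun x => mem_closedBall_zero_iff.2 (hM x)) (half_pos hε)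
  have hφg : ‖E.integral φ - E.integral g‖ ≤ ε / 2 :=
    E.norm_integral_sub_le hφ g.measurable fun x => by
      rw [← dist_eq_norm, dist_comm]; exact (hg x).le
  have hstar : ‖E.integral (star ⇑g) - E.integral (star φ)‖ ≤ ε / 2 :=
    E.norm_integral_sub_le g.measurable.star hφ.star fun x => by
      rw [Pi.star_apply, Pi.star_apply, ← star_sub, norm_star, ← dist_eq_norm]
      exact (hg x).le
  calc dist (star (E.integral φ)) (E.integral (star φ))
      = ‖star (E.integral φ - E.integral g) + (E.integral (star ⇑g) - E.integral (star φ))‖ := by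
        rw [dist_eq_norm, star_sub, E.star_integral_simpleFunc, sub_add_sub_cancel]
    _ ≤ ‖E.integral φ - E.integral g‖ + ‖E.integral (star ⇑g) - E.integral (star φ)‖ := by
        rw [← norm_star (E.integral φ - E.integral g)]; exact norm_add_le _ _
    _ ≤ ε := by linarith

theorem sum_norm_integral_apply_sq_le {ι : Type*} (s : Finset ι) {ψ : ι → α → ℂ}
    (hψ : ∀ i, Measurable (ψ i)) {M : ℝ} (hM : ∀ x, ∑ i ∈ s, ‖ψ i x‖ ^ 2 ≤ M) (u : H) :
    ∑ i ∈ s, ‖E.integral (ψ i) u‖ ^ 2 ≤ M * ‖u‖ ^ 2 := by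
  have hmeas (i : ι) : Measurable (star (ψ i) * ψ i) := (hψ i).star.mul (hψ i)
  have hterm (i : ι) (hi : i ∈ s) :
      ‖E.integral (ψ i) u‖ ^ 2 = RCLike.re ⟪E.integral (star (ψ i) * ψ i) u, u⟫_ℂ := by
    rw [E.integral_mul _ _ (hψ i).star (hψ i),
      ← E.star_integral (hψ i) fun x => norm_le_sqrt_of_sum_sq_le (hM x) hi,
      ContinuousLinearMap.star_eq_adjoint, ContinuousLinearMap.apply_norm_sq_eq_inner_adjoint_left]
  let g : α → ℂ := fun x => ∑ i ∈ s, (star (ψ i) * ψ i) x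
  have hg (x : α) : ‖g x‖ ≤ M := (norm_sum_le _ _).trans <| by
    simpa only [Pi.mul_apply, Pi.star_apply, norm_mul, norm_star, sq] using hM x
  calc ∑ i ∈ s, ‖E.integral (ψ i) u‖ ^ 2 = RCLike.re ⟪E.integral g u, u⟫_ℂ := by
        rw [Finset.sum_congr rfl hterm, E.integral_finset_sum s hmeas,
          _root_.sum_apply, sum_inner, map_sum]
    _ ≤ ‖E.integral g u‖ * ‖u‖ := re_inner_le_norm _ _
    _ ≤ M * ‖u‖ * ‖u‖ := by
        gcongr; exact (E.integral g).le_of_opNorm_le (E.integral_norm_le g M hg) u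
    _ = M * ‖u‖ ^ 2 := by ring

end SpectralMeasure

theorem SpectralMeasure.sum_norm_inner_integral_comp_le {X Y ι H : Type*} [MeasurableSpace X]
    [MeasurableSpace Y] [NormedAddCommGroup H] [InnerProductSpace ℂ H] [CompleteSpace H]
    (E₁ : SpectralMeasure X H) (E₂ : SpectralMeasure Y H) (s : Finset ι)
    {φ : ι → X → ℂ} {ψ : ι → Y → ℂ} (hφm : ∀ i, Measurable (φ i)) (hψm : ∀ i, Measurable (ψ i))
    {a b : ℝ} (ha : 0 ≤ a) (hb : 0 ≤ b) (hφ : ∀ x, ∑ i ∈ s, ‖φ i x‖ ^ 2 ≤ a ^ 2)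
    (hψ : ∀ y, ∑ i ∈ s, ‖ψ i y‖ ^ 2 ≤ b ^ 2) (Q : H →L[ℂ] H) (u v : H) :
    ∑ i ∈ s, ‖⟪E₁.integral (φ i) (Q (E₂.integral (ψ i) u)), v⟫_ℂ‖ ≤
      a * b * ‖Q‖ * ‖u‖ * ‖v‖ := by
  have hadj (i : ι) (hi : i ∈ s) (w : H) :
      ⟪E₁.integral (φ i) w, v⟫_ℂ = ⟪w, E₁.integral (star (φ i)) v⟫_ℂ := by
    rw [← E₁.star_integral (hφm i) fun x => norm_le_sqrt_of_sum_sq_le (hφ x) hi,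
      ContinuousLinearMap.star_eq_adjoint, ContinuousLinearMap.adjoint_inner_right]
  have hψu : √(∑ i ∈ s, ‖E₂.integral (ψ i) u‖ ^ 2) ≤ b * ‖u‖ :=
    (Real.sqrt_le_left (by positivity)).2 <| mul_pow b ‖u‖ 2 ▸
      E₂.sum_norm_integral_apply_sq_le s hψm hψ u
  have hφv : √(∑ i ∈ s, ‖E₁.integral (star (φ i)) v‖ ^ 2) ≤ a * ‖v‖ :=
    (Real.sqrt_le_left (by positivity)).2 <| mul_pow a ‖v‖ 2 ▸
      E₁.sum_norm_integral_apply_sq_le s (fun i => (hφm i).star)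
        (by simpa only [Pi.star_apply, norm_star] using hφ) v
  calc ∑ i ∈ s, ‖⟪E₁.integral (φ i) (Q (E₂.integral (ψ i) u)), v⟫_ℂ‖
      = ∑ i ∈ s, ‖⟪Q (E₂.integral (ψ i) u), E₁.integral (star (φ i)) v⟫_ℂ‖ :=
        Finset.sum_congr rfl fun i hi => by rw [hadj i hi]
    _ ≤ ∑ i ∈ s, ‖Q‖ * (‖E₂.integral (ψ i) u‖ * ‖E₁.integral (star (φ i)) v‖) :=
        Finset.sum_le_sum fun i _ => (norm_inner_le_norm _ _).trans <| by
          rw [← mul_assoc]; exact mul_le_mul_of_nonneg_right (Q.le_opNorm _) (norm_nonneg _)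
    _ ≤ ‖Q‖ * ((b * ‖u‖) * (a * ‖v‖)) := by
        rw [← Finset.mul_sum]
        gcongr
        exact (Real.sum_mul_le_sqrt_mul_sqrt _ _ _).trans
          (mul_le_mul hψu hφv (Real.sqrt_nonneg _) (by positivity))
    _ = a * b * ‖Q‖ * ‖u‖ * ‖v‖ := by ring

/-- Let `E₁`, `E₂` be spectral measures on a Hilbert space and let
`Φ(x,y) = Σₙ φₙ(x)ψₙ(y)` with `Σ|φₙ|² ≤ a²` and `Σ|ψₙ|² ≤ b²` pointwise (φₙ, ψₙ bounded
measurable). Then for every bounded operator `Q`, the series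
`Σₙ (∫φₙ dE₁) Q (∫ψₙ dE₂)` converges in the weak operator topology to a bounded
operator `T` with `‖T‖ ≤ a·b·‖Q‖`. -/
theorem haagerup_doi_wot_convergence
    {X Y : Type*} [MeasurableSpace X] [MeasurableSpace Y]
    {H : Type*} [NormedAddCommGroup H] [InnerProductSpace ℂ H] [CompleteSpace H]
    (E₁ : SpectralMeasure X H) (E₂ : SpectralMeasure Y H)
    (φ : ℕ → X → ℂ) (ψ : ℕ → Y → ℂ)
    (hφm : ∀ n, Measurable (φ n)) (hψm : ∀ n, Measurable (ψ n))
    (a b : ℝ) (ha : 0 ≤ a) (hb : 0 ≤ b)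
    (hφ : ∀ x, ∃ S, HasSum (fun n => ‖φ n x‖ ^ 2) S ∧ S ≤ a ^ 2)
    (hψ : ∀ y, ∃ S, HasSum (fun n => ‖ψ n y‖ ^ 2) S ∧ S ≤ b ^ 2)
    (Q : H →L[ℂ] H) :
    ∃ T : H →L[ℂ] H, ‖T‖ ≤ a * b * ‖Q‖ ∧
      ∀ u v : H,
        HasSum (fun n => ⟪(E₁.integral (φ n)) (Q ((E₂.integral (ψ n)) u)), v⟫_ℂ)
          ⟪T u, v⟫_ℂ := by
  have hφs (s : Finset ℕ) (x : X) : ∑ n ∈ s, ‖φ n x‖ ^ 2 ≤ a ^ 2 :=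
    let ⟨_, hS, hSa⟩ := hφ x
    (sum_le_hasSum s (fun _ _ => sq_nonneg _) hS).trans hSa
  have hψs (s : Finset ℕ) (y : Y) : ∑ n ∈ s, ‖ψ n y‖ ^ 2 ≤ b ^ 2 :=
    let ⟨_, hS, hSb⟩ := hψ y
    (sum_le_hasSum s (fun _ _ => sq_nonneg _) hS).trans hSb
  exact exists_hasSum_inner_of_sum_norm_inner_le
    (fun n => E₁.integral (φ n) ∘L Q ∘L E₂.integral (ψ n)) (by positivity) fun u v s =>
      E₁.sum_norm_inner_integral_comp_le E₂ s hφm hψm ha hb (hφs s) (hψs s) Q u v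
end
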